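/- Fix reals a < b and positive constants c, α, β. Let h : ℝ × ℝ → ℝ be smooth (C^∞ in (t,x)) and satisfy the Dzektser seepage equation ∂ₜh − c² ∂ₓ²∂ₜh = α ∂ₓ²h − β ∂ₓ⁴h for all t ∈ ℝ and x ∈ [a,b]. Define H(t) := (1/2)∫ₐᵇ ( h² + c² (∂ₓh)² ) dx. Then for all t, H'(t) = [ α h ∂ₓh − β h ∂ₓ³h + β ∂ₓh ∂ₓ²h + c² h ∂ₜ∂ₓh ]ₐᵇ − ∫ₐᵇ ( α (∂ₓh)² + β (∂ₓ²h)² ) dx, where [g]ₐᵇ := g(t,b) − g(t,a). (Power balance for the Dzektser equation: dissipated power in the bulk plus power and energy flows through the boundary ports.) -/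

import Mathlib

open Function Set intervalIntegral MeasureTheory
open scoped Interval


/-- Time partial derivative of a function `ℝ × ℝ → ℝ` (first variable). -/
noncomputable def dt (h : ℝ → ℝ → ℝ) : ℝ → ℝ → ℝ := fun t x => deriv (fun s => h s x) t

/-- Space partial derivative of a function `ℝ × ℝ → ℝ` (second variable). -/
noncomputable def dx (h : ℝ → ℝ → ℝ) : ℝ → ℝ → ℝ := fun t x => deriv (fun y => h t y) x

section helpers
variable {h : ℝ → ℝ → ℝ}

lemma hasDerivAt_snd' (G : ℝ × ℝ → ℝ) (hG : Differentiable ℝ G) (t x : ℝ) :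
    HasDerivAt (fun y => G (t, y)) (fderiv ℝ G (t, x) (0, 1)) x := by
  have h1 : HasFDerivAt (fun y : ℝ => ((t, y) : ℝ × ℝ))
      ((0 : ℝ →L[ℝ] ℝ).prod (ContinuousLinearMap.id ℝ ℝ)) x :=
    (hasFDerivAt_const t x).prodMk (hasFDerivAt_id x)
  have h2 := (hG (t, x)).hasFDerivAt
  have h3 := (h2.comp x h1).hasDerivAt
  simpa [Function.comp_def] using h3

lemma hasDerivAt_fst' (G : ℝ × ℝ → ℝ) (hG : Differentiable ℝ G) (t x : ℝ) :
    HasDerivAt (fun s => G (s, x)) (fderiv ℝ G (t, x) (1, 0)) t := by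
  have h1 : HasFDerivAt (fun s : ℝ => ((s, x) : ℝ × ℝ))
      ((ContinuousLinearMap.id ℝ ℝ).prod (0 : ℝ →L[ℝ] ℝ)) t :=
    (hasFDerivAt_id t).prodMk (hasFDerivAt_const x t)
  have h2 := (hG (t, x)).hasFDerivAt
  have h3 := (h2.comp t h1).hasDerivAt
  simpa [Function.comp_def] using h3

lemma dx_eq (hsm : ContDiff ℝ (⊤ : ℕ∞) (uncurry h)) (t x : ℝ) :
    dx h t x = fderiv ℝ (uncurry h) (t, x) (0, 1) :=
  (hasDerivAt_snd' (uncurry h) (hsm.differentiable (by simp)) t x).deriv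

lemma dt_eq (hsm : ContDiff ℝ (⊤ : ℕ∞) (uncurry h)) (t x : ℝ) :
    dt h t x = fderiv ℝ (uncurry h) (t, x) (1, 0) :=
  (hasDerivAt_fst' (uncurry h) (hsm.differentiable (by simp)) t x).deriv

lemma contDiff_dx (hsm : ContDiff ℝ (⊤ : ℕ∞) (uncurry h)) : ContDiff ℝ (⊤ : ℕ∞) (uncurry (dx h)) := by
  have : uncurry (dx h) = fun p : ℝ × ℝ => fderiv ℝ (uncurry h) p (0, 1) := by
    funext p; exact dx_eq hsm p.1 p.2
  rw [this]
  exact (hsm.fderiv_right (by simp)).clm_apply contDiff_const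

lemma contDiff_dt (hsm : ContDiff ℝ (⊤ : ℕ∞) (uncurry h)) : ContDiff ℝ (⊤ : ℕ∞) (uncurry (dt h)) := by
  have : uncurry (dt h) = fun p : ℝ × ℝ => fderiv ℝ (uncurry h) p (1, 0) := by
    funext p; exact dt_eq hsm p.1 p.2
  rw [this]
  exact (hsm.fderiv_right (by simp)).clm_apply contDiff_const

lemma hasDerivAt_dx (hsm : ContDiff ℝ (⊤ : ℕ∞) (uncurry h)) (t x : ℝ) :
    HasDerivAt (fun y => h t y) (dx h t x) x := by
  rw [dx_eq hsm]
  exact hasDerivAt_snd' (uncurry h) (hsm.differentiable (by simp)) t x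

lemma hasDerivAt_dt (hsm : ContDiff ℝ (⊤ : ℕ∞) (uncurry h)) (t x : ℝ) :
    HasDerivAt (fun s => h s x) (dt h t x) t := by
  rw [dt_eq hsm]
  exact hasDerivAt_fst' (uncurry h) (hsm.differentiable (by simp)) t x

lemma second_apply (hsm : ContDiff ℝ (⊤ : ℕ∞) (uncurry h)) (t x : ℝ) (v w : ℝ × ℝ) :
    fderiv ℝ (fun p : ℝ × ℝ => fderiv ℝ (uncurry h) p v) (t, x) w
      = fderiv ℝ (fderiv ℝ (uncurry h)) (t, x) w v := by
  have hd : HasFDerivAt (fderiv ℝ (uncurry h)) (fderiv ℝ (fderiv ℝ (uncurry h)) (t, x)) (t, x) :=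
    ((hsm.fderiv_right (m := (⊤ : ℕ∞)) (by simp)).differentiable (by simp) (t, x)).hasFDerivAt
  have hA : HasFDerivAt (fun p : ℝ × ℝ => fderiv ℝ (uncurry h) p v)
      ((ContinuousLinearMap.apply ℝ ℝ v).comp (fderiv ℝ (fderiv ℝ (uncurry h)) (t, x))) (t, x) :=
    (ContinuousLinearMap.apply ℝ ℝ v).hasFDerivAt.comp (t, x) hd
  rw [hA.fderiv]; rfl

lemma swap_dt_dx (hsm : ContDiff ℝ (⊤ : ℕ∞) (uncurry h)) (t x : ℝ) :
    dt (dx h) t x = dx (dt h) t x := by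
  have hdiff : Differentiable ℝ (uncurry h) := hsm.differentiable (by simp)
  have hf : ∀ y : ℝ × ℝ, HasFDerivAt (uncurry h) (fderiv ℝ (uncurry h) y) y :=
    fun y => (hdiff y).hasFDerivAt
  have hd : HasFDerivAt (fderiv ℝ (uncurry h)) (fderiv ℝ (fderiv ℝ (uncurry h)) (t, x)) (t, x) :=
    ((hsm.fderiv_right (m := (⊤ : ℕ∞)) (by simp)).differentiable (by simp) (t, x)).hasFDerivAt
  have hsym := second_derivative_symmetric hf hd ((1 : ℝ), (0 : ℝ)) ((0 : ℝ), (1 : ℝ))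
  have e1 : dt (dx h) t x = fderiv ℝ (fderiv ℝ (uncurry h)) (t, x) (1, 0) (0, 1) := by
    rw [dt_eq (contDiff_dx hsm)]
    have : uncurry (dx h) = fun p : ℝ × ℝ => fderiv ℝ (uncurry h) p (0, 1) := by
      funext p; exact dx_eq hsm p.1 p.2
    rw [this, second_apply hsm]
  have e2 : dx (dt h) t x = fderiv ℝ (fderiv ℝ (uncurry h)) (t, x) (0, 1) (1, 0) := by
    rw [dx_eq (contDiff_dt hsm)]
    have : uncurry (dt h) = fun p : ℝ × ℝ => fderiv ℝ (uncurry h) p (1, 0) := by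
      funext p; exact dt_eq hsm p.1 p.2
    rw [this, second_apply hsm]
  rw [e1, e2, hsym]

lemma cont_slice (hsm : ContDiff ℝ (⊤ : ℕ∞) (uncurry h)) (t : ℝ) : Continuous (fun x => h t x) :=
  hsm.continuous.comp (continuous_const.prodMk continuous_id)

end helpers

/-- Power balance for the Dzektser seepage equation:
`H'(t) = [α h ∂ₓh − β h ∂ₓ³h + β ∂ₓh ∂ₓ²h + c² h ∂ₜ∂ₓh]ₐᵇ − ∫ₐᵇ (α(∂ₓh)² + β(∂ₓ²h)²)`. -/
theorem stmt5 (a b : ℝ) (hab : a < b) (c α β : ℝ) (hc : 0 < c) (hα : 0 < α) (hβ : 0 < β)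
    (h : ℝ → ℝ → ℝ) (hsm : ContDiff ℝ (⊤ : ℕ∞) (Function.uncurry h))
    (heq : ∀ t : ℝ, ∀ x ∈ Set.Icc a b,
      dt h t x - c ^ 2 * dx (dx (dt h)) t x
        = α * dx (dx h) t x - β * dx (dx (dx (dx h))) t x) :
    ∀ t : ℝ,
      HasDerivAt
        (fun s => (1 / 2 : ℝ) * ∫ x in a..b, ((h s x) ^ 2 + c ^ 2 * (dx h s x) ^ 2))
        (((α * h t b * dx h t b - β * h t b * dx (dx (dx h)) t b
            + β * dx h t b * dx (dx h) t b + c ^ 2 * h t b * dt (dx h) t b)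
          - (α * h t a * dx h t a - β * h t a * dx (dx (dx h)) t a
            + β * dx h t a * dx (dx h) t a + c ^ 2 * h t a * dt (dx h) t a))
         - ∫ x in a..b, (α * (dx h t x) ^ 2 + β * (dx (dx h) t x) ^ 2)) t := by
  intro t
  have hab' : a ≤ b := hab.le
  -- smoothness of derivatives
  have H1 := contDiff_dx hsm
  have H2 := contDiff_dx H1
  have H3 := contDiff_dx H2
  have H4 := contDiff_dx H3
  have T0 := contDiff_dt hsm
  have T1 := contDiff_dt H1    -- dt (dx h)
  have T1x := contDiff_dx T1   -- dx (dt (dx h))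
  -- continuity of slices at time t
  have c0 := cont_slice hsm t
  have c1 := cont_slice H1 t
  have c2 := cont_slice H2 t
  have c3 := cont_slice H3 t
  have c4 := cont_slice H4 t
  have cw0 := cont_slice T0 t
  have cw1 := cont_slice T1 t
  have cw1x := cont_slice T1x t
  -- Step 1: differentiation under the integral sign
  set F' : ℝ → ℝ → ℝ := fun s x =>
    2 * h s x * dt h s x + c ^ 2 * (2 * dx h s x * dt (dx h) s x) with hF'
  have contF' : Continuous fun p : ℝ × ℝ => F' p.1 p.2 := by
    have e1 : Continuous fun p : ℝ × ℝ => h p.1 p.2 := hsm.continuous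
    have e2 : Continuous fun p : ℝ × ℝ => dt h p.1 p.2 := T0.continuous
    have e3 : Continuous fun p : ℝ × ℝ => dx h p.1 p.2 := H1.continuous
    have e4 : Continuous fun p : ℝ × ℝ => dt (dx h) p.1 p.2 := T1.continuous
    fun_prop
  obtain ⟨C, hC⟩ := ((isCompact_Icc (a := t - 1) (b := t + 1)).prod
    (isCompact_uIcc (a := a) (b := b))).exists_bound_of_continuousOn contF'.continuousOn
  have key : HasDerivAt (fun s => ∫ x in a..b, (h s x ^ 2 + c ^ 2 * dx h s x ^ 2))
      (∫ x in a..b, F' t x) t := by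
    have hmeas : ∀ᶠ s in nhds t,
        AEStronglyMeasurable (fun x => h s x ^ 2 + c ^ 2 * dx h s x ^ 2)
          (volume.restrict (Ι a b)) := by
      refine Filter.Eventually.of_forall fun s => Continuous.aestronglyMeasurable ?_
      have := cont_slice hsm s; have := cont_slice H1 s; fun_prop
    have hint : IntervalIntegrable (fun x => h t x ^ 2 + c ^ 2 * dx h t x ^ 2) volume a b := by
      apply Continuous.intervalIntegrable; fun_prop
    have hmeas' : AEStronglyMeasurable (F' t) (volume.restrict (Ι a b)) := by
      refine Continuous.aestronglyMeasurable ?_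
      have : Continuous (F' t) :=
        contF'.comp (continuous_const.prodMk continuous_id)
      exact this
    have hbound : ∀ᵐ x ∂volume, x ∈ Ι a b → ∀ s ∈ Metric.ball t 1, ‖F' s x‖ ≤ C := by
      refine Filter.Eventually.of_forall fun x hx s hs => ?_
      have hs' : s ∈ Icc (t - 1) (t + 1) := by
        rw [Metric.mem_ball, Real.dist_eq, abs_sub_lt_iff] at hs
        constructor <;> linarith [hs.1, hs.2]
      exact hC (s, x) ⟨hs', uIoc_subset_uIcc hx⟩
    have hdiff : ∀ᵐ x ∂volume, x ∈ Ι a b → ∀ s ∈ Metric.ball t 1,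
        HasDerivAt (fun s => h s x ^ 2 + c ^ 2 * dx h s x ^ 2) (F' s x) s := by
      refine Filter.Eventually.of_forall fun x _ s _ => ?_
      have d1 := (hasDerivAt_dt hsm s x).pow 2
      have d2 := ((hasDerivAt_dt H1 s x).pow 2).const_mul (c ^ 2)
      have := d1.add d2
      simpa [hF', Pi.pow_def, Pi.add_def, mul_assoc, mul_comm, mul_left_comm] using this
    exact (intervalIntegral.hasDerivAt_integral_of_dominated_loc_of_deriv_le (Metric.ball_mem_nhds t one_pos)
      hmeas hint hmeas' hbound (intervalIntegrable_const) hdiff).2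
  have main := key.const_mul (1 / 2 : ℝ)
  refine main.congr_deriv (Eq.symm ?_)
  -- Step 2: the integral identity at time t
  -- interval integrability of all the products we need
  have i00 : IntervalIntegrable (fun x => h t x * dt h t x) volume a b := by
    apply Continuous.intervalIntegrable; fun_prop
  have i11 : IntervalIntegrable (fun x => dx h t x * dt (dx h) t x) volume a b := by
    apply Continuous.intervalIntegrable; fun_prop
  have iw1x : IntervalIntegrable (fun x => dx (dt (dx h)) t x * h t x) volume a b := by
    apply Continuous.intervalIntegrable; fun_prop
  have i02 : IntervalIntegrable (fun x => h t x * dx (dx h) t x) volume a b := by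
    apply Continuous.intervalIntegrable; fun_prop
  have i04 : IntervalIntegrable (fun x => h t x * dx (dx (dx (dx h))) t x) volume a b := by
    apply Continuous.intervalIntegrable; fun_prop
  have iu1 : IntervalIntegrable (fun x => dx h t x) volume a b := c1.intervalIntegrable a b
  have iu2 : IntervalIntegrable (fun x => dx (dx h) t x) volume a b := c2.intervalIntegrable a b
  have iu3 : IntervalIntegrable (fun x => dx (dx (dx h)) t x) volume a b :=
    c3.intervalIntegrable a b
  have iu0 : IntervalIntegrable (fun x => h t x) volume a b := c0.intervalIntegrable a b
  have iu11 : IntervalIntegrable (fun x => dx h t x * dx h t x) volume a b := by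
    apply Continuous.intervalIntegrable; fun_prop
  have iu13 : IntervalIntegrable (fun x => dx h t x * dx (dx (dx h)) t x) volume a b := by
    apply Continuous.intervalIntegrable; fun_prop
  have iu22 : IntervalIntegrable (fun x => dx (dx h) t x * dx (dx h) t x) volume a b := by
    apply Continuous.intervalIntegrable; fun_prop
  -- f1: split the derivative integral
  have f1 : (∫ x in a..b, F' t x)
      = 2 * (∫ x in a..b, h t x * dt h t x)
        + 2 * c ^ 2 * ∫ x in a..b, dx h t x * dt (dx h) t x := by
    rw [show (∫ x in a..b, F' t x)
        = ∫ x in a..b, (2 * (h t x * dt h t x) + 2 * c ^ 2 * (dx h t x * dt (dx h) t x)) from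
      integral_congr fun x _ => by simp only [hF']; ring]
    rw [integral_add (i00.const_mul 2) (i11.const_mul (2 * c ^ 2)),
      intervalIntegral.integral_const_mul, intervalIntegral.integral_const_mul]
  -- f2: integration by parts for the c² term
  have f2 : (∫ x in a..b, dx h t x * dt (dx h) t x)
      = dt (dx h) t b * h t b - dt (dx h) t a * h t a
        - ∫ x in a..b, dx (dt (dx h)) t x * h t x := by
    rw [show (∫ x in a..b, dx h t x * dt (dx h) t x)
        = ∫ x in a..b, dt (dx h) t x * dx h t x from integral_congr fun x _ => mul_comm _ _]
    exact intervalIntegral.integral_mul_deriv_eq_deriv_mul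
      (fun x _ => hasDerivAt_dx T1 t x) (fun x _ => hasDerivAt_dx hsm t x) (cw1x.intervalIntegrable a b) iu1
  -- swap mixed partials
  have swapfun : dt (dx h) = dx (dt h) := funext fun s => funext fun y => swap_dt_dx hsm s y
  -- f3: use the PDE
  have f3 : (∫ x in a..b, h t x * dt h t x)
        - c ^ 2 * ∫ x in a..b, dx (dt (dx h)) t x * h t x
      = α * (∫ x in a..b, h t x * dx (dx h) t x)
        - β * ∫ x in a..b, h t x * dx (dx (dx (dx h))) t x := by
    rw [← intervalIntegral.integral_const_mul, ← intervalIntegral.integral_const_mul, ← intervalIntegral.integral_const_mul,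
      ← integral_sub i00 (iw1x.const_mul _), ← integral_sub (i02.const_mul _) (i04.const_mul _)]
    refine integral_congr fun x hx => ?_
    have hx' : x ∈ Icc a b := by rwa [uIcc_of_le hab'] at hx
    have hpde := heq t x hx'
    have hswap : dx (dt (dx h)) t x = dx (dx (dt h)) t x := by rw [swapfun]
    rw [hswap]
    linear_combination h t x * hpde
  -- f4, f5, f6: integrations by parts
  have f4 : (∫ x in a..b, h t x * dx (dx h) t x)
      = h t b * dx h t b - h t a * dx h t a - ∫ x in a..b, dx h t x * dx h t x :=
    integral_mul_deriv_eq_deriv_mul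
      (fun x _ => hasDerivAt_dx hsm t x) (fun x _ => hasDerivAt_dx H1 t x) iu1 iu2
  have f5 : (∫ x in a..b, h t x * dx (dx (dx (dx h))) t x)
      = h t b * dx (dx (dx h)) t b - h t a * dx (dx (dx h)) t a
        - ∫ x in a..b, dx h t x * dx (dx (dx h)) t x :=
    integral_mul_deriv_eq_deriv_mul
      (fun x _ => hasDerivAt_dx hsm t x) (fun x _ => hasDerivAt_dx H3 t x)
      iu1 (c4.intervalIntegrable a b)
  have f6 : (∫ x in a..b, dx h t x * dx (dx (dx h)) t x)
      = dx h t b * dx (dx h) t b - dx h t a * dx (dx h) t a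
        - ∫ x in a..b, dx (dx h) t x * dx (dx h) t x :=
    integral_mul_deriv_eq_deriv_mul
      (fun x _ => hasDerivAt_dx H1 t x) (fun x _ => hasDerivAt_dx H2 t x) iu2 iu3
  -- f7: split the dissipation integral
  have f7 : (∫ x in a..b, (α * (dx h t x) ^ 2 + β * (dx (dx h) t x) ^ 2))
      = α * (∫ x in a..b, dx h t x * dx h t x)
        + β * ∫ x in a..b, dx (dx h) t x * dx (dx h) t x := by
    rw [show (∫ x in a..b, (α * (dx h t x) ^ 2 + β * (dx (dx h) t x) ^ 2))
        = ∫ x in a..b, (α * (dx h t x * dx h t x) + β * (dx (dx h) t x * dx (dx h) t x)) from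
      integral_congr fun x _ => by ring]
    rw [integral_add (iu11.const_mul α) (iu22.const_mul β),
      intervalIntegral.integral_const_mul, intervalIntegral.integral_const_mul]
  linear_combination (-1 : ℝ) * ((1 / 2 : ℝ) * f1 + c ^ 2 * f2 + f3 + α * f4 - β * f5 + β * f6 + f7)
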